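/- arXiv:1501.00602 — 7 statements merged into one kernel-verified Lean document; each statement's English description precedes it below -/
import Mathlib

section
/- Let F ⊆ L be fields and let S be a finite-dimensional F-subspace of L. For finite-dimensional F-subspaces X, Y of L, define ∂_S X = dim(XS) − dim(X), where XS denotes the F-linear span of products. Then ∂_S(X+Y) + ∂_S(X∩Y) ≤ ∂_S(X) + ∂_S(Y). -/
open Module Submodule

theorem stmt0 {F L : Type*} [Field F] [Field L] [Algebra F L]
    (S X Y : Submodule F L)
    (hS : FiniteDimensional F ↥S) (hX : FiniteDimensional F ↥X)
    (hY : FiniteDimensional F ↥Y) :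
    ((finrank F ↥((X ⊔ Y) * S) : ℤ) - finrank F ↥(X ⊔ Y)) +
      ((finrank F ↥((X ⊓ Y) * S) : ℤ) - finrank F ↥(X ⊓ Y)) ≤
    ((finrank F ↥(X * S) : ℤ) - finrank F ↥X) +
      ((finrank F ↥(Y * S) : ℤ) - finrank F ↥Y) := by
  have hXS : FiniteDimensional F ↥(X * S) :=
    Module.Finite.iff_fg.mpr ((Module.Finite.iff_fg.mp hX).mul (Module.Finite.iff_fg.mp hS))
  have hYS : FiniteDimensional F ↥(Y * S) :=
    Module.Finite.iff_fg.mpr ((Module.Finite.iff_fg.mp hY).mul (Module.Finite.iff_fg.mp hS))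
  -- dimension identity for X, Y
  have h1 : finrank F ↥(X ⊔ Y) + finrank F ↥(X ⊓ Y) = finrank F ↥X + finrank F ↥Y :=
    Submodule.finrank_sup_add_finrank_inf_eq X Y
  -- (X ⊔ Y) * S = X*S ⊔ Y*S
  have h2 : (X ⊔ Y) * S = X * S ⊔ Y * S := Submodule.sup_mul X Y S
  -- (X ⊓ Y) * S ≤ X*S ⊓ Y*S
  have h3 : (X ⊓ Y) * S ≤ X * S ⊓ Y * S :=
    le_inf (mul_le_mul' inf_le_left le_rfl)
      (mul_le_mul' inf_le_right le_rfl)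
  have h4 : finrank F ↥((X ⊓ Y) * S) ≤ finrank F ↥(X * S ⊓ Y * S) :=
    Submodule.finrank_mono h3
  have h5 : finrank F ↥(X * S ⊔ Y * S) + finrank F ↥(X * S ⊓ Y * S)
      = finrank F ↥(X * S) + finrank F ↥(Y * S) :=
    Submodule.finrank_sup_add_finrank_inf_eq (X * S) (Y * S)
  rw [h2]
  omega
end

section
/- Let L/F be an extension with no proper finite intermediate extension. Suppose S is an F-subspace of L of dimension s ≥ 2, and A is a 2-dimensional subspace with basis {1, a} such that dim(AS) = dim(S) + 1 ≤ dim_F(L) − 1. Then there exists g ∈ S such that {g, ga, …, g a^{s−1}} is a basis of S. -/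
/-!
Let `Tₖ = S ∩ a⁻¹S ∩ ⋯ ∩ a⁻ᵏS`. Multiplication by `aᵏ⁺¹` maps `Tₖ` into `aS ⊆ AS`, in which `S`
has codimension one, so `Tₖ₊₁`, the preimage of `S` in `Tₖ`, has codimension at most one in `Tₖ`.
Hence `Tₛ₋₁ ≠ 0`, and any nonzero `g ∈ Tₛ₋₁` gives `g, ga, …, gaˢ⁻¹ ∈ S`. These are independent
because `1, a, …, aˢ⁻¹` are: `a ∉ F` since `dim A = 2`, so `a` is either transcendental or
generates `L`, whose degree exceeds `s`.
-/

open Module Submodule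

theorem Transcendental.linearIndependent_pow {F L : Type*} [Field F] [CommRing L] [Algebra F L]
    {a : L} (ha : Transcendental F a) : LinearIndependent F fun n : ℕ => a ^ n := by
  have h := (Polynomial.basisMonomials F).linearIndependent.map' (Polynomial.aeval a).toLinearMap
    (LinearMap.ker_eq_bot.2 (transcendental_iff_injective.1 ha))
  simpa [Function.comp_def] using h

theorem linearIndependent_pow_of_intermediateField_eq_bot_or_top {F L : Type*} [Field F] [Field L]
    [Algebra F L] (hL : ∀ K : IntermediateField F L, FiniteDimensional F K → K = ⊥ ∨ K = ⊤)
    {a : L} (ha : a ∉ (⊥ : IntermediateField F L)) {n : ℕ} (hn : (n : Cardinal) ≤ Module.rank F L) :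
    LinearIndependent F fun i : Fin n => a ^ (i : ℕ) := by
  by_cases hint : IsIntegral F a
  · have := IntermediateField.adjoin.finiteDimensional hint
    obtain hbot | htop := hL _ this
    · exact absurd (hbot ▸ IntermediateField.mem_adjoin_simple_self F a) ha
    have hrank : Module.rank F L = (minpoly F a).natDegree := by
      rw [← IntermediateField.adjoin.finrank hint, Module.finrank_eq_rank, htop,
        IntermediateField.rank_top']
    have hdeg : n ≤ (minpoly F a).natDegree := by exact_mod_cast hrank ▸ hn
    exact (linearIndependent_pow a).comp (Fin.castLE hdeg) (Fin.castLE_injective hdeg)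
  · have ht : Transcendental F a := fun h => hint h.isIntegral
    exact ht.linearIndependent_pow.comp Fin.val Fin.val_injective

theorem notMem_bot_of_finrank_span_pair_eq_two {F L : Type*} [Field F] [Field L] [Algebra F L]
    {a : L} (h : finrank F (span F {1, a}) = 2) : a ∉ (⊥ : IntermediateField F L) := by
  intro ha
  obtain ⟨c, rfl⟩ := IntermediateField.mem_bot.1 ha
  have hle : span F {1, algebraMap F L c} ≤ span F {(1 : L)} := by
    rw [span_le, Set.insert_subset_iff, Set.singleton_subset_iff, Algebra.algebraMap_eq_smul_one]
    exact ⟨subset_span rfl, smul_mem _ _ (subset_span rfl)⟩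
  have := (Submodule.finrank_mono hle).trans (finrank_span_le_card ({1} : Set L))
  simp only [Set.toFinset_singleton, Finset.card_singleton] at this
  omega

theorem Submodule.finrank_le_finrank_inf_comap_add {K M N : Type*} [DivisionRing K]
    [AddCommGroup M] [Module K M] [AddCommGroup N] [Module K N] {f : M →ₗ[K] N}
    {U : Submodule K M} {V W : Submodule K N} [FiniteDimensional K U] [FiniteDimensional K W]
    (hVW : V ≤ W) (hUW : ∀ x ∈ U, f x ∈ W) :
    finrank K U ≤ finrank K ↥(U ⊓ V.comap f) + (finrank K W - finrank K V) := by
  let φ : U →ₗ[K] W := (f.domRestrict U).codRestrict W fun x => hUW x x.2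
  let V' := V.comap W.subtype
  have hker : LinearMap.ker (V'.mkQ ∘ₗ φ) = (U ⊓ V.comap f).comap U.subtype := by
    ext x
    simp only [LinearMap.mem_ker, LinearMap.coe_comp, Function.comp_apply, mkQ_apply,
      Quotient.mk_eq_zero, mem_comap, mem_inf, coe_subtype, SetLike.coe_mem, true_and]
    exact Iff.rfl
  have hrank := LinearMap.finrank_range_add_finrank_ker (V'.mkQ ∘ₗ φ)
  rw [hker, (comapSubtypeEquivOfLe inf_le_left).finrank_eq] at hrank
  have hquot := V'.finrank_quotient_add_finrank
  rw [(comapSubtypeEquivOfLe hVW).finrank_eq] at hquot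
  have := Submodule.finrank_le (LinearMap.range (V'.mkQ ∘ₗ φ))
  omega

section PowComapInf

variable {F L : Type*} [Field F] [CommRing L] [Algebra F L]

def powComapInf (S : Submodule F L) (a : L) (k : ℕ) : Submodule F L :=
  ⨅ i ≤ k, S.comap (LinearMap.mulLeft F (a ^ i))

variable {S : Submodule F L} {a : L}

theorem mem_powComapInf {k : ℕ} {x : L} : x ∈ powComapInf S a k ↔ ∀ i ≤ k, a ^ i * x ∈ S := by
  simp [powComapInf]

theorem powComapInf_le (k : ℕ) : powComapInf S a k ≤ S := fun x hx => by
  simpa using mem_powComapInf.1 hx 0 k.zero_le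

theorem powComapInf_zero : powComapInf S a 0 = S :=
  le_antisymm (powComapInf_le 0) fun x hx => mem_powComapInf.2 fun i hi => by
    simpa [Nat.le_zero.1 hi] using hx

theorem powComapInf_succ (k : ℕ) :
    powComapInf S a (k + 1) = powComapInf S a k ⊓ S.comap (LinearMap.mulLeft F (a ^ (k + 1))) := by
  ext x
  simp only [mem_inf, mem_powComapInf, mem_comap, LinearMap.mulLeft_apply, Nat.le_succ_iff]
  grind

theorem finrank_le_finrank_powComapInf_add [FiniteDimensional F S] {A : Submodule F L}
    [FiniteDimensional F ↥(A * S)] (h1A : 1 ∈ A) (haA : a ∈ A)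
    (hAS : finrank F ↥(A * S) ≤ finrank F S + 1) (k : ℕ) :
    finrank F S ≤ finrank F (powComapInf S a k) + k := by
  induction k with
  | zero => rw [powComapInf_zero, add_zero]
  | succ k ih =>
    have := Submodule.finiteDimensional_of_le (powComapInf_le (S := S) (a := a) k)
    have hSAS : S ≤ A * S := fun x hx => by simpa using mul_mem_mul h1A hx
    have hstep := Submodule.finrank_le_finrank_inf_comap_add
      (f := LinearMap.mulLeft F (a ^ (k + 1))) hSAS fun x hx => by
        rw [LinearMap.mulLeft_apply, pow_succ', mul_assoc]
        exact mul_mem_mul haA (mem_powComapInf.1 hx k le_rfl)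
    rw [← powComapInf_succ] at hstep
    omega

end PowComapInf

theorem stmt2 {F L : Type*} [Field F] [Field L] [Algebra F L]
    (hL : ∀ K : IntermediateField F L, FiniteDimensional F ↥K → K = ⊥ ∨ K = ⊤)
    (S : Submodule F L) [FiniteDimensional F ↥S] (s : ℕ)
    (hs : finrank F ↥S = s) (h2 : 2 ≤ s)
    (a : L) (A : Submodule F L) (hA : A = span F {1, a})
    (hdA : finrank F ↥A = 2)
    (hAS : finrank F ↥(A * S) = s + 1)
    (hup : ((s + 2 : ℕ) : Cardinal) ≤ Module.rank F L) :
    ∃ g ∈ S, ∃ b : Basis (Fin s) F ↥S, ∀ i : Fin s, (b i : L) = g * a ^ (i : ℕ) := by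
  subst hA
  have hpow : LinearIndependent F fun i : Fin s => a ^ (i : ℕ) :=
    linearIndependent_pow_of_intermediateField_eq_bot_or_top hL
      (notMem_bot_of_finrank_span_pair_eq_two hdA) ((Nat.cast_le.2 (by omega)).trans hup)
  have : FiniteDimensional F ↥(span F {1, a} * S) := Module.finite_of_finrank_pos (by omega)
  have hT := finrank_le_finrank_powComapInf_add (S := S) (subset_span (Set.mem_insert 1 {a}))
    (subset_span (Set.mem_insert_of_mem 1 rfl)) (by omega) (s - 1)
  have hT0 : powComapInf S a (s - 1) ≠ ⊥ := fun hbot => by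
    rw [hbot, finrank_bot] at hT
    omega
  obtain ⟨g, hgT, hg0⟩ := exists_mem_ne_zero_of_ne_bot hT0
  have hgS (i : Fin s) : g * a ^ (i : ℕ) ∈ S := by
    simpa [mul_comm] using mem_powComapInf.1 hgT i (Nat.le_sub_one_of_lt i.2)
  have hli : LinearIndependent F fun i : Fin s => (⟨g * a ^ (i : ℕ), hgS i⟩ : S) :=
    .of_comp S.subtype <| hpow.map' (LinearMap.mulLeft F g) <|
      LinearMap.ker_eq_bot.2 (mul_right_injective₀ hg0)
  have : NeZero s := ⟨by omega⟩
  exact ⟨g, powComapInf_le _ hgT, basisOfLinearIndependentOfCardEqFinrank hli (by simp [hs]),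
    fun i => by rw [coe_basisOfLinearIndependentOfCardEqFinrank]⟩
end

section
/- Let L/F be a finite separable field extension and let S be a finite-dimensional F-subspace of L. If X is a k-fragment of S, then X* = (XS)^⊥, the orthogonal complement of XS with respect to the trace bilinear form (x,y) ↦ Tr_{L/F}(xy), is also a k-fragment of S. -/
open Module Submodule

variable {F L : Type*} [Field F] [Field L] [Algebra F L]

/-- The boundary `∂_S X = dim(XS) - dim(X)` (as an integer). -/
noncomputable def deltaS (S X : Submodule F L) : ℤ :=
  (finrank F ↥(X * S) : ℤ) - finrank F ↥X

/-- Membership in the family `𝒳_k`: `k ≤ dim X < ∞` and `dim(XS) + k ≤ dim L`. -/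
def InXk (k : ℕ) (S X : Submodule F L) : Prop :=
  FiniteDimensional F ↥X ∧ k ≤ finrank F ↥X ∧
    ((finrank F ↥(X * S) + k : ℕ) : Cardinal) ≤ Module.rank F L

/-- A `k`-fragment of `S`: an element of `𝒳_k` attaining the minimum `κ_k(S)` of `∂_S`. -/
def IsFragment (k : ℕ) (S X : Submodule F L) : Prop :=
  InXk k S X ∧ ∀ Y : Submodule F L, InXk k S Y → deltaS S X ≤ deltaS S Y

/-- A `k`-atom of `S`: a `k`-fragment of minimum dimension. -/
def IsAtomk (k : ℕ) (S A : Submodule F L) : Prop :=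
  IsFragment k S A ∧ ∀ B : Submodule F L, IsFragment k S B → finrank F ↥A ≤ finrank F ↥B

/-!
Write `X* = (XS)^⊥` and `n = dim L`. Nondegeneracy of the trace form gives `dim X* = n - dim XS`,
and its associativity `Tr((xs)u) = Tr(x(us))` gives `X*S ⊆ X^⊥`, so `dim X*S ≤ n - dim X`.
Hence `∂X* ≤ (n - dim X) - (n - dim XS) = ∂X`, and the same two dimension counts show that `X*`
again satisfies the size constraints of `𝒳_k`; minimality of `∂X` then makes `X*` a fragment.
-/

open LinearMap.BilinForm

theorem Algebra.orthogonal_traceForm_mul_le {R A : Type*} [CommRing R] [CommRing A] [Algebra R A]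
    (X S : Submodule R A) :
    (Algebra.traceForm R A).orthogonal (X * S) * S ≤ (Algebra.traceForm R A).orthogonal X := by
  rw [Submodule.mul_le]
  intro u hu s hs x hx
  have hxs : Algebra.traceForm R A (x * s) u = 0 := hu (x * s) (mul_mem_mul hx hs)
  simpa only [Algebra.traceForm_apply, mul_assoc, mul_comm s u] using hxs

theorem inXk_iff_of_finiteDimensional [FiniteDimensional F L] (k : ℕ) (S X : Submodule F L) :
    InXk k S X ↔
      FiniteDimensional F X ∧ k ≤ finrank F X ∧ finrank F ↥(X * S) + k ≤ finrank F L := by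
  rw [InXk, ← finrank_eq_rank, Nat.cast_le]

section Separable

variable [FiniteDimensional F L] [Algebra.IsSeparable F L]

theorem finrank_orthogonal_traceForm (X : Submodule F L) :
    finrank F ((Algebra.traceForm F L).orthogonal X) = finrank F L - finrank F X :=
  finrank_orthogonal (traceForm_nondegenerate F L) X

theorem finrank_orthogonal_traceForm_mul_le (X S : Submodule F L) :
    finrank F ((Algebra.traceForm F L).orthogonal (X * S) * S) ≤ finrank F L - finrank F X :=
  finrank_orthogonal_traceForm X ▸ finrank_mono (Algebra.orthogonal_traceForm_mul_le X S)

theorem deltaS_orthogonal_traceForm_le (S X : Submodule F L) :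
    deltaS S ((Algebra.traceForm F L).orthogonal (X * S)) ≤ deltaS S X := by
  have hmul := finrank_orthogonal_traceForm_mul_le X S
  have hX := finrank_le X
  have hXS := finrank_le (X * S)
  unfold deltaS
  rw [finrank_orthogonal_traceForm]
  omega

theorem InXk.orthogonal_traceForm {k : ℕ} {S X : Submodule F L} (hX : InXk k S X) :
    InXk k S ((Algebra.traceForm F L).orthogonal (X * S)) := by
  rw [inXk_iff_of_finiteDimensional] at hX ⊢
  obtain ⟨-, hkX, hXS⟩ := hX
  have hmul := finrank_orthogonal_traceForm_mul_le X S
  have hXL := finrank_le X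
  refine ⟨inferInstance, ?_, ?_⟩
  · rw [finrank_orthogonal_traceForm]
    omega
  · omega

end Separable

theorem stmt4 [FiniteDimensional F L] [Algebra.IsSeparable F L]
    (S : Submodule F L) (k : ℕ) (X : Submodule F L)
    (hX : IsFragment k S X) :
    IsFragment k S ((Algebra.traceForm F L).orthogonal (X * S)) :=
  ⟨hX.1.orthogonal_traceForm, fun Y hY => (deltaS_orthogonal_traceForm_le S X).trans (hX.2 Y hY)⟩
end

section
/- Let L/F be a finite separable extension, S a finite-dimensional F-subspace of L, and A a k-atom of S. Then dim_F(L) ≥ 2·dim_F(A) + κ_k(S). -/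
open Module Submodule

variable {F L : Type*} [Field F] [Field L] [Algebra F L]

/-!
The trace form of a finite separable extension is nondegenerate, so the orthogonal of a
subspace `X` of `L` has dimension `dim L - dim X`, and `tr(a (y s)) = tr((a s) y)` gives
`(A S)^⊥ S ≤ A^⊥`. For a `k`-fragment `A` this makes `(A S)^⊥` an element of `𝒳_k` whose
boundary is at most `∂_S A`, hence again a `k`-fragment. If `A` is an atom, then
`dim A ≤ dim (A S)^⊥ = dim L - dim (A S)`, which is the claim.
-/

theorem Algebra.traceForm_orthogonal_mul_mul_le {R T : Type*} [CommRing R] [CommRing T]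
    [Algebra R T] (X S : Submodule R T) :
    (traceForm R T).orthogonal (X * S) * S ≤ (traceForm R T).orthogonal X := by
  rw [Submodule.mul_le]
  intro y hy s hs
  rw [LinearMap.BilinForm.mem_orthogonal_iff]
  intro x hx
  have hxsy : traceForm R T (x * s) y = 0 := hy (x * s) (mul_mem_mul hx hs)
  change traceForm R T x (y * s) = 0
  rw [traceForm_apply] at hxsy ⊢
  rwa [mul_left_comm, mul_comm y]

section

variable [FiniteDimensional F L]

theorem inXk_iff {k : ℕ} {S X : Submodule F L} :
    InXk k S X ↔ k ≤ finrank F X ∧ finrank F ↥(X * S) + k ≤ finrank F L := by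
  rw [InXk, ← Module.finrank_eq_rank, Nat.cast_le]
  exact and_iff_right inferInstance

theorem finrank_traceForm_orthogonal [Algebra.IsSeparable F L] (X : Submodule F L) :
    finrank F ↥((Algebra.traceForm F L).orthogonal X) = finrank F L - finrank F X :=
  LinearMap.BilinForm.finrank_orthogonal (traceForm_nondegenerate F L) X

theorem finrank_traceForm_orthogonal_mul_mul_add_finrank_le [Algebra.IsSeparable F L]
    (X S : Submodule F L) :
    finrank F ↥((Algebra.traceForm F L).orthogonal (X * S) * S) + finrank F X ≤ finrank F L := by
  have h := Submodule.finrank_mono (Algebra.traceForm_orthogonal_mul_mul_le X S)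
  rw [finrank_traceForm_orthogonal] at h
  have := Submodule.finrank_le X
  omega

end

theorem IsFragment.of_deltaS_le {k : ℕ} {S X Y : Submodule F L} (hX : IsFragment k S X)
    (hY : InXk k S Y) (hYX : deltaS S Y ≤ deltaS S X) : IsFragment k S Y :=
  ⟨hY, fun Z hZ => hYX.trans (hX.2 Z hZ)⟩

theorem IsFragment.traceForm_orthogonal_mul [FiniteDimensional F L] [Algebra.IsSeparable F L]
    {k : ℕ} {S A : Submodule F L} (hA : IsFragment k S A) :
    IsFragment k S ((Algebra.traceForm F L).orthogonal (A * S)) := by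
  obtain ⟨hkA, hAS⟩ := inXk_iff.1 hA.1
  have hdim := finrank_traceForm_orthogonal (A * S)
  have hmul := finrank_traceForm_orthogonal_mul_mul_add_finrank_le A S
  refine hA.of_deltaS_le (inXk_iff.2 ⟨by omega, by omega⟩) ?_
  unfold deltaS
  omega

theorem stmt5 [FiniteDimensional F L] [Algebra.IsSeparable F L]
    (S A : Submodule F L) (k : ℕ) (hA : IsAtomk k S A) :
    2 * (finrank F ↥A : ℤ) + deltaS S A ≤ (finrank F L : ℤ) := by
  obtain ⟨hfrag, hmin⟩ := hA
  have hA_le := hmin _ hfrag.traceForm_orthogonal_mul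
  rw [finrank_traceForm_orthogonal] at hA_le
  have hAS := (inXk_iff.1 hfrag.1).2
  unfold deltaS
  omega
end

section
/- Let A be a finite-dimensional F-subspace of a field extension L/F satisfying dim(A ∩ xA) ≤ 1 for all x ∈ L \ F (a Sidon space). Then for all nonzero x, y, z, t ∈ A with xy = zt, either (Fx = Fz and Fy = Ft) or (Fx = Ft and Fy = Fz). -/
/-!
Since `xy = zt`, we have `t / y = x / z` and `z / y = x / t`. If `x / z ∈ F` this gives
`Fx = Fz` and `Fy = Ft`. Otherwise `x = (x / z) z` and `t = (x / z) y` both lie in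
`A ∩ (x / z) A`, which is at most a line by the Sidon property, so `Fx = Ft`, i.e. `x / t ∈ F`,
and then `Fy = Fz`.
-/

open Module Submodule

theorem Submodule.span_singleton_eq_of_finrank_le_one {K V : Type*} [DivisionRing K]
    [AddCommGroup V] [Module K V] {W : Submodule K V} [FiniteDimensional K W]
    (hW : finrank K W ≤ 1) {u v : V} (hu : u ∈ W) (hv : v ∈ W) (hu0 : u ≠ 0) (hv0 : v ≠ 0) :
    span K {u} = span K {v} := by
  have span_eq {w : V} (hw : w ∈ W) (hw0 : w ≠ 0) : span K {w} = W :=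
    eq_of_le_of_finrank_le ((span_singleton_le_iff_mem w W).mpr hw)
      (by rwa [finrank_span_singleton hw0])
  rw [span_eq hu hu0, span_eq hv hv0]

section FieldExtension

variable {F L : Type*} [Field F] [Field L] [Algebra F L]

theorem span_singleton_eq_span_singleton_iff_div_mem_range {a b : L} (ha : a ≠ 0) (hb : b ≠ 0) :
    span F {a} = span F {b} ↔ a / b ∈ Set.range (algebraMap F L) := by
  rw [span_singleton_eq_span_singleton]
  constructor
  · rintro ⟨u, rfl⟩
    refine ⟨(u⁻¹ : Fˣ), ?_⟩
    rw [Units.smul_def, Algebra.smul_def]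
    field_simp
    rw [← map_mul, Units.inv_mul, map_one]
  · rintro ⟨c, hc⟩
    have hc0 : c ≠ 0 := by rintro rfl; simp_all [eq_comm]
    refine ⟨(Units.mk0 c hc0)⁻¹, ?_⟩
    simp [Units.smul_def, Algebra.smul_def, hc, div_mul_cancel₀ b ha]

theorem mem_inf_map_mulLeft_of_mul_eq {A : Submodule F L} {w a b : L} (ha : a ∈ A) (hb : b ∈ A)
    (hab : w * a = b) : b ∈ A ⊓ A.map (LinearMap.mulLeft F w) :=
  ⟨hb, a, ha, hab⟩

end FieldExtension

theorem stmt13 {F L : Type*} [Field F] [Field L] [Algebra F L]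
    (A : Submodule F L) (hfd : FiniteDimensional F ↥A)
    (hSidon : ∀ x : L, x ∉ Set.range (algebraMap F L) →
      finrank F ↥(A ⊓ A.map (LinearMap.mulLeft F x)) ≤ 1)
    (x y z t : L) (hx : x ∈ A) (hy : y ∈ A) (hz : z ∈ A) (ht : t ∈ A)
    (hx0 : x ≠ 0) (hy0 : y ≠ 0) (hz0 : z ≠ 0) (ht0 : t ≠ 0)
    (h : x * y = z * t) :
    (span F {x} = span F {z} ∧ span F {y} = span F {t}) ∨
    (span F {x} = span F {t} ∧ span F {y} = span F {z}) := by
  have hty : t / y = x / z := by field_simp; linear_combination -h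
  have hzy : z / y = x / t := by field_simp; linear_combination -h
  rw [eq_comm (a := span F {y}), eq_comm (a := span F {y}),
    span_singleton_eq_span_singleton_iff_div_mem_range hx0 hz0,
    span_singleton_eq_span_singleton_iff_div_mem_range ht0 hy0,
    span_singleton_eq_span_singleton_iff_div_mem_range hx0 ht0,
    span_singleton_eq_span_singleton_iff_div_mem_range hz0 hy0, hty, hzy, and_self, and_self]
  refine or_iff_not_imp_left.mpr fun hw => ?_
  have : FiniteDimensional F ↥(A ⊓ A.map (LinearMap.mulLeft F (x / z))) :=
    finiteDimensional_of_le inf_le_left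
  exact (span_singleton_eq_span_singleton_iff_div_mem_range hx0 ht0).mp <|
    span_singleton_eq_of_finrank_le_one (hSidon _ hw)
      (mem_inf_map_mulLeft_of_mul_eq hz hx (div_mul_cancel₀ x hz0))
      (mem_inf_map_mulLeft_of_mul_eq hy ht (by rw [← hty, div_mul_cancel₀ t hy0])) hx0 ht0
end

section
/- Let A be a Sidon space of dimension n in an extension of F with basis (a_1, …, a_n), and let Φ: 𝒬_n → A² be the F-linear map on quadratic forms sending x_i x_j ↦ a_i a_j. Then A is a Sidon space if and only if every nonzero Q ∈ ker Φ has weight at least 3, where the weight of Q is the minimal k such that Q is a sum of k products of two linear forms. -/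
open Module Submodule

/-- The weight of a quadratic form (homogeneous degree-2 polynomial): the least `k`
such that it is a sum of `k` products of two linear forms. -/
noncomputable def wt {F : Type*} [Field F] {n : ℕ} (Q : MvPolynomial (Fin n) F) : ℕ :=
  sInf {k | ∃ l l' : Fin k → MvPolynomial (Fin n) F,
    (∀ i, (l i).IsHomogeneous 1 ∧ (l' i).IsHomogeneous 1) ∧ Q = ∑ i, l i * l' i}

/-!
Via `aeval a`, linear forms are identified with the elements of `A`, so a nonzero kernel element
of weight at most two is a relation `u v = u' v'` in `A` that does not hold between the
corresponding linear forms. If `A` is Sidon, put `x = u' / u`: both `u' = x u` and `v = x v'` lie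
in `A ∩ xA`, so either `x ∈ F` or `v ∈ F u'`, and in both cases the two factorisations agree up
to scalars, so the relation already holds between the linear forms.

Conversely, if `v = x v'` and `w = x w'` lie in `A ∩ xA`, then `w v' = v w'` is a relation of
weight two, so it holds between the lifted linear forms. Linear forms are prime, hence `w ∈ F v`
or `v' ∈ F v`, and the latter would put `x` in `F`.
-/

namespace MvPolynomial

section LinearForms

variable {σ F : Type*} [Field F] {p q r s : MvPolynomial σ F}

theorem IsHomogeneous.irreducible_of_degree_one (hp : p.IsHomogeneous 1) (hp0 : p ≠ 0) :
    Irreducible p := by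
  refine irreducible_of_totalDegree_eq_one (hp.totalDegree hp0) fun x hx => ?_
  obtain ⟨d, hd⟩ := ne_zero_iff.mp hp0
  exact isUnit_iff_ne_zero.mpr (ne_zero_of_dvd_ne_zero hd (hx d))

theorem IsHomogeneous.exists_eq_C_mul_of_dvd (hp : p.IsHomogeneous 1) (hp0 : p ≠ 0)
    (hq : q.IsHomogeneous 1) (hpq : p ∣ q) : ∃ c : F, q = C c * p := by
  obtain rfl | hq0 := eq_or_ne q 0
  · exact ⟨0, by simp⟩
  obtain ⟨t, rfl⟩ := hpq
  have ht0 : t ≠ 0 := right_ne_zero_of_mul hq0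
  have ht : t.totalDegree = 0 := by
    have := totalDegree_mul_of_isDomain hp0 ht0
    rw [hq.totalDegree hq0, hp.totalDegree hp0] at this
    omega
  exact ⟨coeff 0 t, by rw [mul_comm, ← totalDegree_eq_zero_iff_eq_C.mp ht]⟩

theorem IsHomogeneous.exists_eq_C_mul_of_mul_eq_mul (hp : p.IsHomogeneous 1) (hp0 : p ≠ 0)
    (hq : q.IsHomogeneous 1) (hr : r.IsHomogeneous 1) (h : q * r = p * s) :
    (∃ c : F, q = C c * p) ∨ ∃ c : F, r = C c * p := by
  rcases (hp.irreducible_of_degree_one hp0).prime.dvd_or_dvd ⟨s, h⟩ with hpq | hpr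
  · exact .inl (hp.exists_eq_C_mul_of_dvd hp0 hq hpq)
  · exact .inr (hp.exists_eq_C_mul_of_dvd hp0 hr hpr)

variable {L : Type*} [CommRing L] [Algebra F L]

theorem map_aeval_homogeneousSubmodule_one (a : σ → L) :
    (homogeneousSubmodule σ F 1).map (aeval a).toLinearMap = span F (Set.range a) := by
  rw [homogeneousSubmodule_one_eq_span_X, Submodule.map_span, ← Set.range_comp]
  congr 2
  ext i
  simp

theorem IsHomogeneous.aeval_mem_span {a : σ → L} (hp : p.IsHomogeneous 1) :
    MvPolynomial.aeval a p ∈ span F (Set.range a) :=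
  map_aeval_homogeneousSubmodule_one (F := F) a ▸
    Submodule.mem_map_of_mem (f := (MvPolynomial.aeval a).toLinearMap) hp

theorem exists_isHomogeneous_aeval_eq {a : σ → L} {w : L} (hw : w ∈ span F (Set.range a)) :
    ∃ p : MvPolynomial σ F, p.IsHomogeneous 1 ∧ aeval a p = w := by
  rw [← map_aeval_homogeneousSubmodule_one (F := F)] at hw
  obtain ⟨p, hp, rfl⟩ := hw
  exact ⟨p, hp, rfl⟩

theorem IsHomogeneous.eq_zero_of_aeval_eq_zero {a : σ → L} (ha : LinearIndependent F a)
    (hp : p.IsHomogeneous 1) (h : MvPolynomial.aeval a p = 0) : p = 0 := by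
  have hp' : p ∈ LinearMap.range (Finsupp.linearCombination F X) := by
    rw [Finsupp.range_linearCombination, ← homogeneousSubmodule_one_eq_span_X]
    exact hp
  obtain ⟨c, rfl⟩ := hp'
  have hc : Finsupp.linearCombination F a c = 0 := by
    rw [← h, ← AlgHom.toLinearMap_apply, Finsupp.apply_linearCombination]
    congr 1
    ext i
    simp
  rw [linearIndependent_iff.mp ha c hc, map_zero]

theorem IsHomogeneous.eq_of_aeval_eq {a : σ → L} (ha : LinearIndependent F a)
    (hp : p.IsHomogeneous 1) (hq : q.IsHomogeneous 1)
    (h : MvPolynomial.aeval a p = MvPolynomial.aeval a q) : p = q :=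
  sub_eq_zero.mp ((hp.sub hq).eq_zero_of_aeval_eq_zero ha (by rw [map_sub, h, sub_self]))

theorem IsHomogeneous.eq_C_mul_of_aeval_eq_smul {a : σ → L} (ha : LinearIndependent F a)
    (hp : p.IsHomogeneous 1) (hq : q.IsHomogeneous 1) {c : F}
    (h : MvPolynomial.aeval a q = c • MvPolynomial.aeval a p) : q = C c * p :=
  hq.eq_of_aeval_eq ha (hp.C_mul c) (by rw [h, map_mul, aeval_C, Algebra.smul_def])

theorem IsHomogeneous.mul_eq_zero_of_aeval_mul_eq_zero [IsDomain L] {a : σ → L}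
    (ha : LinearIndependent F a) (hp : p.IsHomogeneous 1) (hq : q.IsHomogeneous 1)
    (h : MvPolynomial.aeval a p * MvPolynomial.aeval a q = 0) : p * q = 0 := by
  rcases mul_eq_zero.mp h with h | h
  · rw [hp.eq_zero_of_aeval_eq_zero ha h, zero_mul]
  · rw [hq.eq_zero_of_aeval_eq_zero ha h, mul_zero]

end LinearForms

section Weight

variable {σ F : Type*} [Field F]

theorem exists_eq_sum_mul_of_isHomogeneous_two {Q : MvPolynomial σ F}
    (hQ : Q.IsHomogeneous 2) :
    ∃ k, ∃ l l' : Fin k → MvPolynomial σ F,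
      (∀ i, (l i).IsHomogeneous 1 ∧ (l' i).IsHomogeneous 1) ∧ Q = ∑ i, l i * l' i := by
  have hQ' : Q ∈ homogeneousSubmodule σ F 1 * homogeneousSubmodule σ F 1 := by
    rw [← pow_two, homogeneousSubmodule_one_pow]
    exact hQ
  clear hQ
  induction hQ' using Submodule.mul_induction_on' with
  | mem_mul_mem p hp q hq =>
    exact ⟨1, ![p], ![q], fun i => Fin.fin_one_eq_zero i ▸ ⟨hp, hq⟩, by simp⟩
  | add Q _ R _ hQ hR =>
    obtain ⟨k, l, l', hl, rfl⟩ := hQ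
    obtain ⟨m, r, r', hr, rfl⟩ := hR
    refine ⟨k + m, Fin.append l r, Fin.append l' r', fun i => ?_, by simp [Fin.sum_univ_add]⟩
    refine Fin.addCases (fun i => ?_) (fun i => ?_) i
    · simpa using hl i
    · simpa using hr i

variable {n : ℕ} {Q : MvPolynomial (Fin n) F}

theorem wt_le_two_iff (hQ : Q.IsHomogeneous 2) :
    wt Q ≤ 2 ↔ ∃ p p' q q' : MvPolynomial (Fin n) F, p.IsHomogeneous 1 ∧ p'.IsHomogeneous 1 ∧
      q.IsHomogeneous 1 ∧ q'.IsHomogeneous 1 ∧ Q = p * p' + q * q' := by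
  constructor
  · intro hwt
    obtain ⟨l, l', hl, hsum⟩ : ∃ l l' : Fin (wt Q) → MvPolynomial (Fin n) F,
        (∀ i, (l i).IsHomogeneous 1 ∧ (l' i).IsHomogeneous 1) ∧ Q = ∑ i, l i * l' i :=
      Nat.sInf_mem (exists_eq_sum_mul_of_isHomogeneous_two hQ)
    have h0 : (0 : MvPolynomial (Fin n) F).IsHomogeneous 1 := isHomogeneous_zero _ _ _
    generalize wt Q = k at *
    interval_cases k
    · exact ⟨0, 0, 0, 0, h0, h0, h0, h0, by simpa using hsum⟩
    · exact ⟨l 0, l' 0, 0, 0, (hl 0).1, (hl 0).2, h0, h0, by simpa using hsum⟩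
    · exact ⟨l 0, l' 0, l 1, l' 1, (hl 0).1, (hl 0).2, (hl 1).1, (hl 1).2,
        by simpa [Fin.sum_univ_two] using hsum⟩
  · rintro ⟨p, p', q, q', hp, hp', hq, hq', rfl⟩
    refine Nat.sInf_le ⟨![p, q], ![p', q'], fun i => ?_, by simp [Fin.sum_univ_two]⟩
    fin_cases i
    exacts [⟨hp, hp'⟩, ⟨hq, hq'⟩]

end Weight

end MvPolynomial

section FinrankLeOne

variable {K V : Type*} [DivisionRing K] [AddCommGroup V] [Module K V]

theorem exists_smul_eq_of_finrank_le_one [FiniteDimensional K V] (h : finrank K V ≤ 1) {v : V}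
    (hv : v ≠ 0) (w : V) : ∃ c : K, c • v = w :=
  have : Nontrivial V := ⟨⟨v, 0, hv⟩⟩
  (finrank_eq_one_iff_of_nonzero' v hv).mp (le_antisymm h finrank_pos) w

theorem finrank_le_one_of_forall_exists_smul_eq (h : ∀ v : V, v ≠ 0 → ∀ w, ∃ c : K, c • v = w) :
    finrank K V ≤ 1 := by
  by_cases hV : ∃ v : V, v ≠ 0
  · obtain ⟨v, hv⟩ := hV
    exact finrank_le_one v (h v hv)
  · push Not at hV
    exact finrank_le_one 0 fun w => ⟨0, by rw [hV w, smul_zero]⟩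

end FinrankLeOne

section SidonSpace

open MvPolynomial

variable {F L : Type*} [Field F] [Field L] [Algebra F L]

def IsSidonSpace (A : Submodule F L) : Prop :=
  ∀ x : L, x ∉ Set.range (algebraMap F L) → finrank F ↥(A ⊓ A.map (LinearMap.mulLeft F x)) ≤ 1

theorem mem_inf_map_mulLeft {A : Submodule F L} {x u w : L} (hu : u ∈ A) (hw : w ∈ A)
    (hxu : x * u = w) : w ∈ A ⊓ A.map (LinearMap.mulLeft F x) :=
  ⟨hw, u, hu, hxu⟩

theorem IsSidonSpace.exists_smul_eq_of_mul_eq_mul {A : Submodule F L} [FiniteDimensional F A]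
    (hA : IsSidonSpace A) {u v u' v' : L} (hu : u ∈ A) (hv : v ∈ A) (hu' : u' ∈ A)
    (hv' : v' ∈ A) (hu0 : u ≠ 0) (h : u * v = u' * v') :
    ∃ c : F, (u' = c • u ∧ v = c • v') ∨ (v' = c • u ∧ v = c • u') := by
  set x := u' / u
  have hxu : x * u = u' := div_mul_cancel₀ u' hu0
  have hxv' : x * v' = v := by
    rw [div_mul_eq_mul_div, ← h, mul_div_cancel_left₀ v hu0]
  by_cases hx : x ∈ Set.range (algebraMap F L)
  · obtain ⟨c, hc⟩ := hx
    exact ⟨c, .inl ⟨by rw [Algebra.smul_def, hc, hxu], by rw [Algebra.smul_def, hc, hxv']⟩⟩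
  obtain rfl | hu'0 := eq_or_ne u' 0
  · have hv0 : v = 0 := (mul_eq_zero.mp (h.trans (zero_mul v'))).resolve_left hu0
    exact ⟨0, .inl ⟨by rw [zero_smul], by rw [hv0, zero_smul]⟩⟩
  have hu'S := mem_inf_map_mulLeft (F := F) hu hu' hxu
  have hvS := mem_inf_map_mulLeft (F := F) hv' hv hxv'
  obtain ⟨c, hc⟩ := exists_smul_eq_of_finrank_le_one (hA x hx)
    (v := ⟨u', hu'S⟩) (fun h0 => hu'0 congr($h0.1)) ⟨v, hvS⟩
  have hcv : v = c • u' := congr($hc.1).symm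
  refine ⟨c, .inr ⟨mul_left_cancel₀ hu'0 ?_, hcv⟩⟩
  rw [← h, hcv, Algebra.smul_def, Algebra.smul_def]
  ring

variable {A : Submodule F L}

theorem IsSidonSpace.mul_eq_mul_of_aeval_mul_eq [FiniteDimensional F A] (hA : IsSidonSpace A)
    {σ : Type*} {a : σ → L} (ha : LinearIndependent F a) (haA : span F (Set.range a) ≤ A)
    {p p' q q' : MvPolynomial σ F} (hp : p.IsHomogeneous 1) (hp' : p'.IsHomogeneous 1)
    (hq : q.IsHomogeneous 1) (hq' : q'.IsHomogeneous 1)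
    (h : aeval a p * aeval a p' = aeval a q * aeval a q') : p * p' = q * q' := by
  have mem {r : MvPolynomial σ F} (hr : r.IsHomogeneous 1) : aeval a r ∈ A :=
    haA hr.aeval_mem_span
  by_cases hp0 : aeval a p = 0
  · rw [hp.eq_zero_of_aeval_eq_zero ha hp0, zero_mul, eq_comm]
    exact hq.mul_eq_zero_of_aeval_mul_eq_zero ha hq' (by rw [← h, hp0, zero_mul])
  obtain ⟨c, ⟨hqc, hp'c⟩ | ⟨hq'c, hp'c⟩⟩ :=
    hA.exists_smul_eq_of_mul_eq_mul (mem hp) (mem hp') (mem hq) (mem hq') hp0 h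
  · rw [hp.eq_C_mul_of_aeval_eq_smul ha hq hqc, hq'.eq_C_mul_of_aeval_eq_smul ha hp' hp'c]
    ring
  · rw [hp.eq_C_mul_of_aeval_eq_smul ha hq' hq'c, hq.eq_C_mul_of_aeval_eq_smul ha hp' hp'c]
    ring

theorem IsSidonSpace.three_le_wt [FiniteDimensional F A] (hA : IsSidonSpace A) {n : ℕ}
    {a : Fin n → L} (ha : LinearIndependent F a) (haA : span F (Set.range a) ≤ A)
    {Q : MvPolynomial (Fin n) F} (hQ : Q.IsHomogeneous 2) (hQa : aeval a Q = 0) (hQ0 : Q ≠ 0) :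
    3 ≤ wt Q := by
  by_contra! hwt
  obtain ⟨p, p', q, q', hp, hp', hq, hq', rfl⟩ := (wt_le_two_iff hQ).mp (by omega)
  have h : aeval a p * aeval a p' = aeval a (-q) * aeval a q' := by
    rw [map_add, map_mul, map_mul] at hQa
    rw [map_neg]
    linear_combination hQa
  apply hQ0
  rw [hA.mul_eq_mul_of_aeval_mul_eq ha haA hp hp' hq.neg hq' h]
  ring

theorem IsSidonSpace.of_three_le_wt {n : ℕ} {a : Fin n → L} (hAa : A ≤ span F (Set.range a))
    (h : ∀ Q : MvPolynomial (Fin n) F, Q.IsHomogeneous 2 → aeval a Q = 0 → Q ≠ 0 → 3 ≤ wt Q) :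
    IsSidonSpace A := by
  intro x hx
  refine finrank_le_one_of_forall_exists_smul_eq fun v hv0 w => ?_
  obtain ⟨hvA, v', hv'A, hxv⟩ := v.2
  obtain ⟨hwA, w', hw'A, hxw⟩ := w.2
  obtain ⟨lv, hlv, hv⟩ := exists_isHomogeneous_aeval_eq (hAa hvA)
  obtain ⟨lw, hlw, hw⟩ := exists_isHomogeneous_aeval_eq (hAa hwA)
  obtain ⟨lv', hlv', hv'⟩ := exists_isHomogeneous_aeval_eq (hAa hv'A)
  obtain ⟨lw', hlw', hw'⟩ := exists_isHomogeneous_aeval_eq (hAa hw'A)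
  have hrel : lw * lv' = lv * lw' := by
    have hhom : (lw * lv' - lv * lw').IsHomogeneous 2 := (hlw.mul hlv').sub (hlv.mul hlw')
    by_contra hne
    have h3 := h _ hhom (by
      rw [map_sub, map_mul, map_mul, hv, hw, hv', hw', ← hxv, ← hxw, LinearMap.mulLeft_apply,
        LinearMap.mulLeft_apply]
      ring) (sub_ne_zero.mpr hne)
    have h2 : wt (lw * lv' - lv * lw') ≤ 2 :=
      (wt_le_two_iff hhom).mpr ⟨lw, lv', -lv, lw', hlw, hlv', hlv.neg, hlw', by ring⟩
    omega
  have hlv0 : lv ≠ 0 := by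
    rintro rfl
    exact hv0 (Subtype.ext (by rw [← hv, map_zero, Submodule.coe_zero]))
  rcases hlv.exists_eq_C_mul_of_mul_eq_mul hlv0 hlw hlv' hrel with ⟨c, hc⟩ | ⟨c, hc⟩
  · refine ⟨c, Subtype.ext ?_⟩
    rw [Submodule.coe_smul, ← hv, ← hw, hc, map_mul, aeval_C, Algebra.smul_def]
  · have hv'c : v' = algebraMap F L c * v := by rw [← hv', ← hv, hc, map_mul, aeval_C]
    have hxc : x * algebraMap F L c = 1 := by
      refine mul_right_cancel₀ (fun h0 => hv0 (Subtype.ext h0)) ?_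
      rw [one_mul, mul_assoc, ← hv'c]
      exact hxv
    exact absurd ⟨c⁻¹, (map_inv₀ _ c).trans (eq_inv_of_mul_eq_one_left hxc).symm⟩ hx

end SidonSpace

theorem stmt14 {F L : Type*} [Field F] [Field L] [Algebra F L]
    (A : Submodule F L) (n : ℕ) (a : Fin n → L)
    (hbasis : ∃ b : Basis (Fin n) F ↥A, ∀ i, (b i : L) = a i) :
    (∀ x : L, x ∉ Set.range (algebraMap F L) →
        finrank F ↥(A ⊓ A.map (LinearMap.mulLeft F x)) ≤ 1) ↔
      (∀ Q : MvPolynomial (Fin n) F, Q.IsHomogeneous 2 →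
        MvPolynomial.aeval a Q = 0 → Q ≠ 0 → 3 ≤ wt Q) := by
  obtain ⟨b, hb⟩ := hbasis
  have : FiniteDimensional F A := Module.Finite.of_basis b
  have ha : a = A.subtype ∘ b := funext fun i => (hb i).symm
  have hspan : span F (Set.range a) = A := by
    rw [ha, Set.range_comp, ← Submodule.map_span, b.span_eq, Submodule.map_subtype_top]
  have hli : LinearIndependent F a := ha ▸ b.linearIndependent.map' A.subtype A.ker_subtype
  exact ⟨fun hA _ => IsSidonSpace.three_le_wt hA hli hspan.le, IsSidonSpace.of_three_le_wt hspan.ge⟩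
end

section
/- If a nonzero quadratic form Q over F_q has rank r and type (r, e) (e = 0 for odd r; e = ±1 distinguishing the two orbits for even r), then wt(Q) = (r − e + 1)/2. -/
/-!
The weight of `Q` is the codimension of a largest subspace on which `Q` vanishes. If `Q`
vanishes on `W` and `v ∉ W`, then on `W + F v` it is a product `l * m` of linear forms, so each
dimension of a complement of `W` costs one product; conversely the common kernel of the first
factors of a decomposition is such a subspace. The common kernel of all `2 k` factors lies in the
radical, whence `r ≤ 2 wt(Q)`. Over a finite field, Chevalley–Warning gives an isotropic vector
outside the radical once the rank is at least `3`; passing to its orthogonal and adding it to the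
radical shows inductively that `Q` vanishes on a subspace of dimension `n - r + (r - 1) / 2`.
For even rank the type records whether the better dimension `n - r / 2` is attained.
-/

open Module

/-- The weight of a quadratic form: the least `k` such that it is (pointwise) a sum of
`k` products of two linear forms. -/
noncomputable def qwt {F : Type*} [Field F] {n : ℕ}
    (Q : QuadraticForm F (Fin n → F)) : ℕ :=
  sInf {k | ∃ l l' : Fin k → ((Fin n → F) →ₗ[F] F), ∀ x, Q x = ∑ i, l i x * l' i x}

open QuadraticMap

section LinearAlgebra

variable {F V : Type*} [Field F] [AddCommGroup V] [Module F V]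

theorem Submodule.exists_le_finrank_eq (W : Submodule F V) {k : ℕ} (hk : k ≤ finrank F W) :
    ∃ U ≤ W, finrank F U = k := by
  obtain ⟨f, hf⟩ := exists_linearIndependent_of_le_finrank hk
  refine ⟨span F (Set.range (W.subtype ∘ f)), span_le.mpr ?_, ?_⟩
  · rintro _ ⟨i, rfl⟩
    exact (f i).2
  · rw [finrank_span_eq_card (hf.map' W.subtype W.ker_subtype), Fintype.card_fin]

variable [FiniteDimensional F V]

theorem LinearMap.finrank_le_finrank_ker_add {W : Type*} [AddCommGroup W] [Module F W]
    [FiniteDimensional F W] (f : V →ₗ[F] W) :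
    finrank F V ≤ finrank F (LinearMap.ker f) + finrank F W := by
  have := f.finrank_range_add_finrank_ker
  have := (LinearMap.range f).finrank_le
  omega

theorem Submodule.finrank_le_finrank_inf_ker_add_one (P : Submodule F V) (f : V →ₗ[F] F) :
    finrank F P ≤ finrank F ↥(P ⊓ LinearMap.ker f) + 1 := by
  have := Submodule.finrank_sup_add_finrank_inf_eq P (LinearMap.ker f)
  have := (P ⊔ LinearMap.ker f).finrank_le
  have := f.finrank_le_finrank_ker_add
  rw [Module.finrank_self] at this
  omega

end LinearAlgebra

namespace QuadraticMap

section FiniteField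

variable {F V : Type*} [Field F] [Fintype F] [AddCommGroup V] [Module F V]
  [FiniteDimensional F V]

open MvPolynomial in
theorem exists_ne_zero_eq_zero_of_three_le_finrank (Q : QuadraticForm F V)
    (hV : 3 ≤ finrank F V) : ∃ v ≠ 0, Q v = 0 := by
  classical
  let b := finBasis F V
  let B := Q.toBilin b
  let f : MvPolynomial (Fin (finrank F V)) F := ∑ i, ∑ j, C (B (b i) (b j)) * X i * X j
  have hf : ∀ c, eval c f = Q (b.equivFun.symm c) := by
    intro c
    rw [← Q.toQuadraticMap_toBilin b, LinearMap.BilinMap.toQuadraticMap_apply,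
      b.equivFun_symm_apply]
    simp only [f, B, map_sum, map_smul, LinearMap.sum_apply, LinearMap.smul_apply, smul_eq_mul,
      map_mul, eval_C, eval_X, Finset.mul_sum]
    rw [Finset.sum_comm]
    exact Finset.sum_congr rfl fun i _ => Finset.sum_congr rfl fun j _ => by ring
  have hdeg : f.totalDegree < Fintype.card (Fin (finrank F V)) := by
    have : f.IsHomogeneous 2 :=
      IsHomogeneous.sum _ _ _ fun i _ => IsHomogeneous.sum _ _ _ fun j _ =>
        (isHomogeneous_C_mul_X _ i).mul (isHomogeneous_X F j)
    rw [Fintype.card_fin]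
    exact this.totalDegree_le.trans_lt (by omega)
  have hdvd := char_dvd_card_solutions (ringChar F) hdeg
  have hzero : eval 0 f = 0 := by rw [hf]; simp
  have hcard : 1 < Fintype.card {c // eval c f = 0} :=
    (CharP.char_is_prime F (ringChar F)).one_lt.trans_le
      (Nat.le_of_dvd (Fintype.card_pos_iff.mpr ⟨⟨0, hzero⟩⟩) hdvd)
  obtain ⟨⟨c, hc⟩, hc0⟩ := Fintype.exists_ne_of_one_lt_card hcard ⟨0, hzero⟩
  refine ⟨b.equivFun.symm c, fun h => hc0 (Subtype.ext ?_), (hf c).symm.trans hc⟩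
  exact b.equivFun.symm.map_eq_zero_iff.1 h

theorem exists_mem_notMem_eq_zero (Q : QuadraticForm F V) {R P : Submodule F V}
    (h : finrank F R + 3 ≤ finrank F P) : ∃ v ∈ P, v ∉ R ∧ Q v = 0 := by
  obtain ⟨C, hC⟩ := R.exists_isCompl
  have := Submodule.finrank_add_eq_of_isCompl hC
  have := Submodule.finrank_sup_add_finrank_inf_eq C P
  have := (C ⊔ P).finrank_le
  obtain ⟨⟨v, hvC, hvP⟩, hv0, hQv⟩ :=
    (Q.comp (C ⊓ P).subtype).exists_ne_zero_eq_zero_of_three_le_finrank (by omega)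
  refine ⟨v, hvP, fun hvR => hv0 ?_, hQv⟩
  have : v ∈ R ⊓ C := ⟨hvR, hvC⟩
  rw [hC.inf_eq_bot, Submodule.mem_bot] at this
  exact Subtype.ext this

theorem exists_isotropic_finrank_ge (Q : QuadraticForm F V) {R P : Submodule F V} (hRP : R ≤ P)
    (hR : ∀ x ∈ R, Q x = 0 ∧ ∀ y ∈ P, polar Q x y = 0) :
    ∃ W ≤ P, (∀ x ∈ W, Q x = 0) ∧
      finrank F R + (finrank F P - finrank F R - 1) / 2 ≤ finrank F W := by
  induction hd : finrank F P - finrank F R using Nat.strong_induction_on generalizing R P with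
  | _ d ih =>
  by_cases hsmall : finrank F P ≤ finrank F R + 2
  · exact ⟨R, hRP, fun x hx => (hR x hx).1, by omega⟩
  obtain ⟨v, hvP, hvR, hQv⟩ := Q.exists_mem_notMem_eq_zero (R := R) (P := P) (by omega)
  -- `v` is orthogonal to itself and to `R`, so `R + F v` is isotropic and orthogonal to
  -- `P' = P ∩ v^⊥`, a subspace of codimension at most one in `P`.
  set P' := P ⊓ LinearMap.ker (polarBilin Q v)
  have hR' : ∀ x ∈ R ⊔ F ∙ v, Q x = 0 ∧ ∀ y ∈ P', polar Q x y = 0 := by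
    intro x hx
    obtain ⟨ρ, hρ, _, hz, rfl⟩ := Submodule.mem_sup.mp hx
    obtain ⟨t, rfl⟩ := Submodule.mem_span_singleton.mp hz
    refine ⟨?_, fun y hy => ?_⟩
    · rw [QuadraticMap.map_add Q ρ, QuadraticMap.map_smul, (hR ρ hρ).1, hQv, polar_smul_right,
        (hR ρ hρ).2 v hvP]
      simp
    · rw [polar_add_left, polar_smul_left, (hR ρ hρ).2 y hy.1, show polar Q v y = 0 from hy.2]
      simp
  have hR'P' : R ⊔ F ∙ v ≤ P' := by
    refine sup_le (le_inf hRP fun x hx => ?_) ((Submodule.span_singleton_le_iff_mem _ _).mpr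
      ⟨hvP, by simp [polar_self, hQv]⟩)
    simpa [polar_comm] using (hR x hx).2 v hvP
  have hR'rank := Submodule.finrank_sup_span_singleton hvR
  have hP'rank : finrank F P ≤ finrank F P' + 1 :=
    P.finrank_le_finrank_inf_ker_add_one (polarBilin Q v)
  have hP'P : finrank F P' ≤ finrank F P := Submodule.finrank_mono inf_le_left
  have hRP' := Submodule.finrank_mono hR'P'
  obtain ⟨W, hWP', hW, hWrank⟩ := ih _ (by omega) hR'P' hR' rfl
  exact ⟨W, hWP'.trans inf_le_left, hW, by omega⟩

end FiniteField

variable {F V : Type*} [Field F] [AddCommGroup V] [Module F V]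

def IsSumOfProducts (Q : QuadraticForm F V) (k : ℕ) : Prop :=
  ∃ l l' : Fin k → (V →ₗ[F] F), ∀ x, Q x = ∑ i, l i x * l' i x

theorem exists_eq_linMulLin_on_sup_span {Q : QuadraticForm F V} {W : Submodule F V}
    (hW : ∀ x ∈ W, Q x = 0) {v : V} (hv : v ∉ W) :
    ∃ l m : V →ₗ[F] F, ∀ x ∈ W ⊔ F ∙ v, Q x = l x * m x := by
  obtain ⟨f, hfv, hfW⟩ := Submodule.exists_dual_map_eq_bot_of_notMem hv inferInstance
  set l := (f v)⁻¹ • f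
  -- `l` is the coordinate of `v` along `W`, and `m (w + t v) = polar Q v w + t Q v`.
  refine ⟨l, polarBilin Q v - Q v • l, fun x hx => ?_⟩
  obtain ⟨w, hw, _, hz, rfl⟩ := Submodule.mem_sup.mp hx
  obtain ⟨t, rfl⟩ := Submodule.mem_span_singleton.mp hz
  have hfw : f w = 0 := by
    simpa [hfW] using Submodule.mem_map_of_mem (f := f) hw
  have hl : l (w + t • v) = t := by simp [l, hfw, mul_comm t, hfv]
  rw [hl, QuadraticMap.map_add Q w, QuadraticMap.map_smul, hW w hw, polar_smul_right]
  simp only [LinearMap.sub_apply, LinearMap.smul_apply, polarBilin_apply_apply, hl,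
    polar_add_right, polar_smul_right, polar_self, polar_comm Q v w, smul_eq_mul, nsmul_eq_mul]
  ring

theorem isSumOfProducts_of_isotropic [FiniteDimensional F V] {Q : QuadraticForm F V}
    {W : Submodule F V} (hW : ∀ x ∈ W, Q x = 0) {k : ℕ}
    (hk : finrank F V ≤ finrank F W + k) : IsSumOfProducts Q k := by
  induction k generalizing Q W with
  | zero =>
    obtain rfl : W = ⊤ := Submodule.eq_top_of_finrank_eq (le_antisymm W.finrank_le (by omega))
    exact ⟨0, 0, fun x => by simp [hW x Submodule.mem_top]⟩
  | succ k ih =>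
    by_cases hWtop : W = ⊤
    · subst hWtop
      exact ⟨0, 0, fun x => by simp [hW x Submodule.mem_top]⟩
    obtain ⟨v, -, hv⟩ := SetLike.exists_of_lt (lt_top_iff_ne_top.mpr hWtop)
    obtain ⟨l, m, hlm⟩ := exists_eq_linMulLin_on_sup_span hW hv
    obtain ⟨l', m', h⟩ := ih (Q := Q - linMulLin l m) (W := W ⊔ F ∙ v)
      (fun x hx => by simp [hlm x hx]) (by rw [Submodule.finrank_sup_span_singleton hv]; omega)
    refine ⟨Fin.cons l l', Fin.cons m m', fun x => ?_⟩
    have := h x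
    simp only [sub_apply, linMulLin_apply] at this
    simp only [Fin.sum_univ_succ, Fin.cons_zero, Fin.cons_succ]
    linear_combination this

namespace IsSumOfProducts

variable [FiniteDimensional F V] {Q : QuadraticForm F V} {k : ℕ}

theorem exists_isotropic (h : IsSumOfProducts Q k) :
    ∃ W : Submodule F V, (∀ x ∈ W, Q x = 0) ∧ finrank F V ≤ finrank F W + k := by
  obtain ⟨l, l', hQ⟩ := h
  refine ⟨LinearMap.ker (LinearMap.pi l), fun x hx => ?_, ?_⟩
  · simp only [LinearMap.ker_pi, Submodule.mem_iInf, LinearMap.mem_ker] at hx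
    simp [hQ, hx]
  · simpa using (LinearMap.pi l).finrank_le_finrank_ker_add

theorem finrank_le_finrank_add_two_mul (h : IsSumOfProducts Q k) {R : Submodule F V}
    (hR : ∀ x, Q x = 0 → (∀ y, polar Q x y = 0) → x ∈ R) :
    finrank F V ≤ finrank F R + 2 * k := by
  obtain ⟨l, l', hQ⟩ := h
  let φ := (LinearMap.pi l).prod (LinearMap.pi l')
  have hker : LinearMap.ker φ ≤ R := by
    intro x hx
    simp only [φ, LinearMap.ker_prod, LinearMap.ker_pi, Submodule.mem_inf, Submodule.mem_iInf,
      LinearMap.mem_ker] at hx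
    exact hR x (by simp [hQ, hx.1]) fun y => by simp [polar, hQ, hx.1, hx.2]
  have := φ.finrank_le_finrank_ker_add
  have := Submodule.finrank_mono hker
  simp only [Module.finrank_prod, Module.finrank_fin_fun] at *
  omega

end IsSumOfProducts

end QuadraticMap

theorem qwt_eq_of_isLeast {F : Type*} [Field F] {n k : ℕ} {Q : QuadraticForm F (Fin n → F)}
    (h : IsLeast {j | IsSumOfProducts Q j} k) : qwt Q = k :=
  h.csInf_eq

theorem stmt17_general {F : Type*} [Field F] [Fintype F] (n : ℕ)
    (Q : QuadraticForm F (Fin n → F))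
    (r : ℕ) (hr : r ≤ n)
    (R : Submodule F (Fin n → F))
    (hR : ∀ x, x ∈ R ↔ (Q x = 0 ∧ ∀ y, QuadraticMap.polar Q x y = 0))
    (hrank : finrank F ↥R = n - r)
    (e : ℤ)
    (he : (Odd r ∧ e = 0) ∨
      (Even r ∧ (e = 1 ∨ e = -1) ∧
        (e = 1 ↔ ∃ W : Submodule F (Fin n → F),
          finrank F ↥W = n - r / 2 ∧ ∀ x ∈ W, Q x = 0))) :
    2 * (qwt Q : ℤ) = (r : ℤ) - e + 1 := by
  have hn : finrank F (Fin n → F) = n := finrank_fin_fun F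
  have hlower : ∀ k, IsSumOfProducts Q k → r ≤ 2 * k := fun k hk => by
    have := hk.finrank_le_finrank_add_two_mul fun x h₁ h₂ => (hR x).2 ⟨h₁, h₂⟩
    omega
  obtain ⟨W₀, -, hW₀, hW₀rank⟩ := Q.exists_isotropic_finrank_ge le_top
    fun x hx => ⟨((hR x).1 hx).1, fun y _ => ((hR x).1 hx).2 y⟩
  rw [finrank_top, hrank, hn] at hW₀rank
  rcases he with ⟨⟨t, rfl⟩, rfl⟩ | ⟨⟨t, rfl⟩, rfl | rfl, hiff⟩
  · have : qwt Q = t + 1 := qwt_eq_of_isLeast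
      ⟨isSumOfProducts_of_isotropic hW₀ (by omega), fun k hk => by have := hlower k hk; omega⟩
    omega
  · obtain ⟨W, hWrank, hW⟩ := hiff.1 rfl
    have : qwt Q = t := qwt_eq_of_isLeast
      ⟨isSumOfProducts_of_isotropic hW (by omega), fun k hk => by have := hlower k hk; omega⟩
    omega
  · have : qwt Q = t + 1 := by
      refine qwt_eq_of_isLeast ⟨isSumOfProducts_of_isotropic hW₀ (by omega), fun k hk => ?_⟩
      by_contra! hkt
      obtain ⟨W₁, hW₁, hW₁rank⟩ := hk.exists_isotropic
      obtain ⟨U, hUW₁, hUrank⟩ := W₁.exists_le_finrank_eq (k := n - (t + t) / 2) (by omega)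
      exact absurd (hiff.2 ⟨U, hUrank, fun x hx => hW₁ x (hUW₁ hx)⟩) (by norm_num)
    omega

theorem stmt17 {F : Type*} [Field F] [Fintype F] (n : ℕ)
    (Q : QuadraticForm F (Fin n → F)) (hQ : Q ≠ 0)
    (r : ℕ) (hr : r ≤ n)
    (R : Submodule F (Fin n → F))
    (hR : ∀ x, x ∈ R ↔ (Q x = 0 ∧ ∀ y, QuadraticMap.polar Q x y = 0))
    (hrank : finrank F ↥R = n - r)
    (e : ℤ)
    (he : (Odd r ∧ e = 0) ∨
      (Even r ∧ (e = 1 ∨ e = -1) ∧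
        (e = 1 ↔ ∃ W : Submodule F (Fin n → F),
          finrank F ↥W = n - r / 2 ∧ ∀ x ∈ W, Q x = 0))) :
    2 * (qwt Q : ℤ) = (r : ℤ) - e + 1 :=
  stmt17_general n Q r hr R hR hrank e he
end
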